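/- arXiv:2406.01200 — 2 statements merged into one kernel-verified Lean document; each statement's English description precedes it below -/
import Mathlib

section
/- (Binomial identity) For every integer $n \ge 0$ and all real numbers $x,y$, $B_n^{(L,Y)}(x+y) = \sum_{k=0}^{n}\binom{n}{k} B_k^{(L,Y)}(x) B_{n-k}^{(L,Y)}(y)$. -/
open MeasureTheory ProbabilityTheory Finset

/-- The rising factorial `⟨x⟩_n = x (x+1) ⋯ (x+n-1)`, with `⟨x⟩_0 = 1`. -/
noncomputable def asc (x : ℝ) : ℕ → ℝ
  | 0 => 1
  | n + 1 => asc x n * (x + n)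

/-- The probabilistic Lah numbers associated with the random variable `Y`, defined from
the iid copies `Ys` of `Y` via `L_Y(n,k) = (1/k!) ∑_{l=0}^k C(k,l) (-1)^{k-l} E[⟨S_l⟩_n]`,
where `S_l = Y_1 + ⋯ + Y_l`. -/
noncomputable def probLah {Ω : Type*} [MeasurableSpace Ω] (μ : Measure Ω)
    (Ys : ℕ → Ω → ℝ) (n k : ℕ) : ℝ :=
  (k.factorial : ℝ)⁻¹ * ∑ l ∈ Finset.range (k + 1),
    (k.choose l : ℝ) * (-1) ^ (k - l) * ∫ ω, asc (∑ j ∈ Finset.range l, Ys j ω) n ∂μ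

/-- The probabilistic Lah-Bell polynomials `B_n^{(L,Y)}(x) = ∑_{k=0}^n L_Y(n,k) x^k`. -/
noncomputable def probLahBell {Ω : Type*} [MeasurableSpace Ω] (μ : Measure Ω)
    (Ys : ℕ → Ω → ℝ) (n : ℕ) (x : ℝ) : ℝ :=
  ∑ k ∈ Finset.range (n + 1), probLah μ Ys n k * x ^ k

/-!
With `F(t) = ∑ₘ E[⟨Y⟩ₘ] tᵐ / m! = E[(1 - t)^(-Y)]`, the Vandermonde identity for rising factorials
and independence give `∑ₙ E[⟨S_l⟩ₙ] tⁿ / n! = F(t)ˡ`. Hence `L_Y(n,k) = n!/k! [tⁿ] (F - 1)ᵏ` and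
`B_n^{(L,Y)}(x) = n! [tⁿ] exp (x G(t))` with `G = F - 1`, and the binomial identity is the
coefficientwise form of `exp ((x + y) G) = exp (x G) exp (y G)`.
-/

open scoped Nat

section ExponentialGeneratingFunctions

open PowerSeries

noncomputable def egf (a : ℕ → ℝ) : ℝ⟦X⟧ := PowerSeries.mk fun n => a n / n !

@[simp]
lemma coeff_egf (a : ℕ → ℝ) (n : ℕ) : coeff n (egf a) = a n / n ! := coeff_mk _ _

lemma egf_injective : Function.Injective egf := by
  intro a b h
  funext n
  simpa [Nat.factorial_ne_zero] using congr_arg (coeff n) h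

lemma egf_mul (a b : ℕ → ℝ) :
    egf a * egf b = egf fun n => ∑ ij ∈ antidiagonal n, n.choose ij.1 * a ij.1 * b ij.2 := by
  ext n
  rw [coeff_mul, coeff_egf, sum_div]
  refine sum_congr rfl fun ⟨i, j⟩ hij => ?_
  obtain rfl : i + j = n := mem_antidiagonal.mp hij
  have hfac : ((i + j).choose i * i ! * j ! : ℝ) = (i + j)! := by
    rw [Nat.choose_symm_add]; exact_mod_cast Nat.add_choose_mul_factorial_mul_factorial i j
  have hchoose : ((i + j).choose i : ℝ) ≠ 0 := by exact_mod_cast (Nat.choose_pos le_self_add).ne'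
  rw [coeff_egf, coeff_egf, ← hfac]
  field_simp

lemma rescale_exp_eq_egf (x : ℝ) : rescale x (exp ℝ) = egf fun n => x ^ n := by
  ext n
  simp [coeff_rescale, coeff_exp, div_eq_mul_inv]

lemma coeff_pow_eq_zero_of_lt {R : Type*} [Semiring R] {G : R⟦X⟧} (hG : constantCoeff G = 0)
    {n k : ℕ} (h : n < k) :
    coeff n (G ^ k) = 0 :=
  coeff_of_lt_order _ ((Nat.cast_lt.mpr h).trans_le (le_order_pow_of_constantCoeff_eq_zero k hG))

lemma coeff_subst_egf {G : ℝ⟦X⟧} (hG : constantCoeff G = 0) (a : ℕ → ℝ) (n : ℕ) :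
    coeff n ((egf a).subst G) = ∑ k ∈ range (n + 1), a k / k ! * coeff n (G ^ k) := by
  rw [coeff_subst' (HasSubst.of_constantCoeff_zero' hG),
    finsum_eq_sum_of_support_subset _ (s := range (n + 1))]
  · simp
  · intro k hk
    by_contra h
    simp only [coe_range, Set.mem_Iio, not_lt] at h
    exact hk (by simp [coeff_pow_eq_zero_of_lt hG (Nat.lt_of_succ_le h)])

/-- `bellPoly G n x = n! [tⁿ] exp (x G(t))`; for `G = ∑ gⱼ tʲ / j!` its coefficients
`n! / k! [tⁿ] Gᵏ` are the partial Bell polynomials `B_{n,k}(g₁, g₂, …)`. -/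
noncomputable def bellPoly (G : ℝ⟦X⟧) (n : ℕ) (x : ℝ) : ℝ :=
  ∑ k ∈ range (n + 1), (n ! / k ! : ℝ) * coeff n (G ^ k) * x ^ k

lemma subst_rescale_exp {G : ℝ⟦X⟧} (hG : constantCoeff G = 0) (x : ℝ) :
    (rescale x (exp ℝ)).subst G = egf fun n => bellPoly G n x := by
  ext n
  rw [rescale_exp_eq_egf, coeff_subst_egf hG, coeff_egf, bellPoly, sum_div]
  refine sum_congr rfl fun k _ => ?_
  field_simp

theorem bellPoly_add {G : ℝ⟦X⟧} (hG : constantCoeff G = 0) (n : ℕ) (x y : ℝ) :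
    bellPoly G n (x + y) =
      ∑ k ∈ range (n + 1), n.choose k * bellPoly G k x * bellPoly G (n - k) y := by
  have h : (egf fun n => bellPoly G n (x + y)) = egf fun n => ∑ ij ∈ antidiagonal n,
      n.choose ij.1 * bellPoly G ij.1 x * bellPoly G ij.2 y := by
    rw [← subst_rescale_exp hG, ← exp_mul_exp_eq_exp_add,
      subst_mul (HasSubst.of_constantCoeff_zero' hG), subst_rescale_exp hG, subst_rescale_exp hG,
      egf_mul]
  rw [congr_fun (egf_injective h) n, Nat.sum_antidiagonal_eq_sum_range_succ
    (fun i j => (n.choose i : ℝ) * bellPoly G i x * bellPoly G j y)]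

lemma coeff_sub_one_pow {R : Type*} [CommRing R] (F : R⟦X⟧) (n k : ℕ) :
    coeff n ((F - 1) ^ k) =
      ∑ l ∈ range (k + 1), (k.choose l : R) * (-1) ^ (k - l) * coeff n (F ^ l) := by
  rw [sub_eq_add_neg, add_pow, map_sum]
  refine sum_congr rfl fun l _ => ?_
  rw [← map_one (C (R := R)), ← map_neg, ← map_pow, ← map_natCast (C (R := R)), mul_assoc,
    ← map_mul, coeff_mul_C]
  ring

end ExponentialGeneratingFunctions

lemma asc_add (u v : ℝ) (n : ℕ) :
    asc (u + v) n = ∑ ij ∈ antidiagonal n, n.choose ij.1 * (asc u ij.1 * asc v ij.2) := by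
  induction n with
  | zero => simp [asc]
  | succ n ih =>
    rw [asc, ih, sum_mul, Finset.sum_antidiagonal_choose_succ_mul
      (fun i j => asc u i * asc v j), ← sum_add_distrib]
    refine sum_congr rfl fun ⟨i, j⟩ hij => ?_
    obtain rfl : i + j = n := mem_antidiagonal.mp hij
    rw [Nat.choose_symm_add]
    simp only [asc]
    push_cast
    ring

lemma asc_eq_eval (x : ℝ) (n : ℕ) : asc x n = (ascPochhammer ℝ n).eval x := by
  induction n with
  | zero => simp [asc]
  | succ n ih => rw [asc, ih, ascPochhammer_succ_right]; simp [mul_add]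

lemma measurable_asc (n : ℕ) : Measurable fun x => asc x n := by
  simpa only [asc_eq_eval] using (ascPochhammer ℝ n).continuous.measurable

lemma asc_zero_left (n : ℕ) : asc 0 n = if n = 0 then 1 else 0 := by
  rw [asc_eq_eval, ascPochhammer_eval_zero]

section Moments

variable {Ω : Type*} [MeasurableSpace Ω] {μ : Measure Ω}

lemma integrable_asc_of_integrable_pow {X : Ω → ℝ}
    (hX : ∀ i : ℕ, Integrable (fun ω => X ω ^ i) μ) (n : ℕ) :
    Integrable (fun ω => asc (X ω) n) μ := by
  simp_rw [asc_eq_eval, Polynomial.eval_eq_sum_range]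
  exact integrable_finsetSum _ fun i _ => (hX i).const_mul _

lemma ProbabilityTheory.IndepFun.integrable_asc_mul_asc {X Z : Ω → ℝ} (hXZ : IndepFun X Z μ)
    (hX : ∀ m, Integrable (fun ω => asc (X ω) m) μ)
    (hZ : ∀ m, Integrable (fun ω => asc (Z ω) m) μ) (i j : ℕ) :
    Integrable (fun ω => asc (X ω) i * asc (Z ω) j) μ :=
  (hXZ.comp (measurable_asc i) (measurable_asc j)).integrable_mul (hX i) (hZ j)

lemma ProbabilityTheory.IndepFun.integrable_asc_add {X Z : Ω → ℝ} (hXZ : IndepFun X Z μ)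
    (hX : ∀ m, Integrable (fun ω => asc (X ω) m) μ)
    (hZ : ∀ m, Integrable (fun ω => asc (Z ω) m) μ) (n : ℕ) :
    Integrable (fun ω => asc (X ω + Z ω) n) μ := by
  simp_rw [asc_add]
  exact integrable_finsetSum _ fun ij _ => (hXZ.integrable_asc_mul_asc hX hZ _ _).const_mul _

lemma ProbabilityTheory.IndepFun.egf_integral_asc_add {X Z : Ω → ℝ} (hXZ : IndepFun X Z μ)
    (hX : ∀ m, Integrable (fun ω => asc (X ω) m) μ)
    (hZ : ∀ m, Integrable (fun ω => asc (Z ω) m) μ) :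
    egf (fun n => ∫ ω, asc (X ω + Z ω) n ∂μ) =
      egf (fun n => ∫ ω, asc (X ω) n ∂μ) * egf (fun n => ∫ ω, asc (Z ω) n ∂μ) := by
  rw [egf_mul]
  congr 1
  funext n
  simp_rw [asc_add]
  rw [integral_finsetSum _ fun ij _ => (hXZ.integrable_asc_mul_asc hX hZ _ _).const_mul _]
  refine sum_congr rfl fun ij _ => ?_
  rw [integral_const_mul, mul_assoc]
  exact congrArg _ <|
    (hXZ.comp (measurable_asc ij.1) (measurable_asc ij.2)).integral_fun_mul_eq_mul_integral
      (hX ij.1).aestronglyMeasurable (hZ ij.2).aestronglyMeasurable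

variable [IsProbabilityMeasure μ]

lemma egf_integral_asc_zero : egf (fun n => ∫ _ : Ω, asc 0 n ∂μ) = 1 := by
  ext n
  rcases n with _ | n <;> simp [asc_zero_left, PowerSeries.coeff_one]

lemma constantCoeff_egf_integral_asc (X : Ω → ℝ) :
    PowerSeries.constantCoeff (egf fun n => ∫ ω, asc (X ω) n ∂μ) = 1 := by
  simp [← PowerSeries.coeff_zero_eq_constantCoeff_apply, asc]

lemma ProbabilityTheory.iIndepFun.egf_integral_asc_sum {Y : Ω → ℝ} {Ys : ℕ → Ω → ℝ}
    (hid : ∀ j, IdentDistrib (Ys j) Y μ μ) (hindep : iIndepFun Ys μ)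
    (hY : ∀ m, Integrable (fun ω => asc (Y ω) m) μ) (l : ℕ) :
    (∀ n, Integrable (fun ω => asc (∑ j ∈ range l, Ys j ω) n) μ) ∧
      egf (fun n => ∫ ω, asc (∑ j ∈ range l, Ys j ω) n ∂μ) =
        egf (fun n => ∫ ω, asc (Y ω) n ∂μ) ^ l := by
  induction l with
  | zero => simpa using egf_integral_asc_zero (μ := μ)
  | succ l ih =>
    have hindep_sum : IndepFun (fun ω => ∑ j ∈ range l, Ys j ω) (Ys l) μ := by
      simpa only [← Finset.sum_fn] using
        hindep.indepFun_finsetSum_of_notMem₀ (fun j => (hid j).aemeasurable_fst) notMem_range_self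
    have hid_asc (m : ℕ) := (hid l).comp (measurable_asc m)
    have hYl (m : ℕ) : Integrable (fun ω => asc (Ys l ω) m) μ :=
      (hid_asc m).integrable_iff.mpr (hY m)
    simp_rw [sum_range_succ]
    refine ⟨hindep_sum.integrable_asc_add ih.1 hYl, ?_⟩
    rw [hindep_sum.egf_integral_asc_add ih.1 hYl, ih.2, pow_succ]
    congr 2
    funext m
    exact (hid_asc m).integral_eq

end Moments

section Lah

variable {Ω : Type*} [MeasurableSpace Ω] {μ : Measure Ω} {Ys : ℕ → Ω → ℝ} {F : PowerSeries ℝ}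

lemma probLah_eq_coeff
    (hF : ∀ l, egf (fun n => ∫ ω, asc (∑ j ∈ range l, Ys j ω) n ∂μ) = F ^ l) (n k : ℕ) :
    probLah μ Ys n k = n ! / k ! * PowerSeries.coeff n ((F - 1) ^ k) := by
  simp_rw [probLah, coeff_sub_one_pow, ← hF, coeff_egf, mul_sum]
  refine sum_congr rfl fun l _ => ?_
  field_simp

lemma probLahBell_eq_bellPoly
    (hF : ∀ l, egf (fun n => ∫ ω, asc (∑ j ∈ range l, Ys j ω) n ∂μ) = F ^ l) (n : ℕ) (x : ℝ) :
    probLahBell μ Ys n x = bellPoly (F - 1) n x := by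
  simp only [probLahBell, bellPoly, probLah_eq_coeff hF]

end Lah

theorem statement_7_general {Ω : Type*} [MeasurableSpace Ω] (μ : Measure Ω) [IsProbabilityMeasure μ]
    (Y : Ω → ℝ) (Ys : ℕ → Ω → ℝ)
    (hid : ∀ j, IdentDistrib (Ys j) Y μ μ)
    (hindep : iIndepFun Ys μ)
    (r : ℝ) (hr : 0 < r)
    (hmgf : ∀ t : ℝ, |t| < r → Integrable (fun ω => Real.exp (t * Y ω)) μ)
    (n : ℕ) (x y : ℝ) :
    probLahBell μ Ys n (x + y) = ∑ k ∈ Finset.range (n + 1),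
      (n.choose k : ℝ) * probLahBell μ Ys k x * probLahBell μ Ys (n - k) y := by
  have hr' : |r / 2| < r := by rw [abs_of_pos (half_pos hr)]; linarith
  have hY : ∀ m, Integrable (fun ω => asc (Y ω) m) μ :=
    integrable_asc_of_integrable_pow <| integrable_pow_of_integrable_exp_mul (half_pos hr).ne'
      (hmgf _ hr') (hmgf _ (by rwa [abs_neg]))
  set F := egf fun m => ∫ ω, asc (Y ω) m ∂μ
  have hF (l : ℕ) := (hindep.egf_integral_asc_sum hid hY l).2
  have hG : PowerSeries.constantCoeff (F - 1) = 0 := by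
    rw [map_sub, constantCoeff_egf_integral_asc, map_one, sub_self]
  simp only [probLahBell_eq_bellPoly hF]
  exact bellPoly_add hG n x y

theorem statement_7 {Ω : Type*} [MeasurableSpace Ω] (μ : Measure Ω) [IsProbabilityMeasure μ]
    (Y : Ω → ℝ) (Ys : ℕ → Ω → ℝ)
    (hY : Measurable Y) (hYs : ∀ j, Measurable (Ys j))
    (hid : ∀ j, IdentDistrib (Ys j) Y μ μ)
    (hindep : iIndepFun Ys μ)
    (r : ℝ) (hr : 0 < r)
    (hmgf : ∀ t : ℝ, |t| < r → Integrable (fun ω => Real.exp (t * Y ω)) μ)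
    (n : ℕ) (x y : ℝ) :
    probLahBell μ Ys n (x + y) = ∑ k ∈ Finset.range (n + 1),
      (n.choose k : ℝ) * probLahBell μ Ys k x * probLahBell μ Ys (n - k) y :=
  statement_7_general μ Y Ys hid hindep r hr hmgf n x y
end

section
/- Let $Y$ be a Poisson random variable with parameter $\alpha > 0$. Then for all integers $n, k \ge 0$, $E\big[\langle S_k\rangle_n\big] = B_n^L(\alpha k)$. -/
open MeasureTheory ProbabilityTheory Finset

/-- The unsigned Lah numbers: `L(n,k) = n!/k! · C(n-1,k-1)` for `1 ≤ k ≤ n`,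
with `L(0,0) = 1` and `L(n,0) = 0` for `n ≥ 1`. -/
noncomputable def Lah (n k : ℕ) : ℝ :=
  if k = 0 then (if n = 0 then 1 else 0)
  else if k ≤ n then (n.factorial : ℝ) / (k.factorial : ℝ) * ((n - 1).choose (k - 1) : ℝ)
  else 0

/-- The Lah-Bell polynomial `B_n^L(x) = ∑_{k=0}^n L(n,k) x^k`. -/
noncomputable def LahBell (n : ℕ) (x : ℝ) : ℝ :=
  ∑ k ∈ Finset.range (n + 1), Lah n k * x ^ k
/-!
Sums of independent Poisson variables are Poisson, so `S_k` has law `Po(λ)` with `λ = kα` and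
`E⟨S_k⟩_n = ∑_m e^{-λ} λ^m / m! · ⟨m⟩_n`. By Vandermonde,
`⟨m⟩_n = n! C(m+n-1, n) = n! ∑_k C(m,k) C(n-1,n-k)`, and the binomial moments of a Poisson
variable are `E[C(X,k)] = λ^k / k!`. Since `n!/k! · C(n-1,n-k) = L(n,k)`, the expectation
is `∑_k L(n,k) λ^k = B_n^L(λ)`.
-/

open scoped NNReal Nat

lemma continuous_asc (n : ℕ) : Continuous fun x => asc x n := by
  induction n with
  | zero => exact continuous_const
  | succ n ih => exact ih.mul (continuous_id.add continuous_const)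

lemma asc_natCast (m n : ℕ) : asc (m : ℝ) n = m.ascFactorial n := by
  induction n with
  | zero => simp [asc]
  | succ n ih => rw [asc, ih, Nat.ascFactorial_succ]; push_cast; ring

lemma Nat.ascFactorial_eq_factorial_mul_sum_choose (m n : ℕ) :
    m.ascFactorial n = n ! * ∑ k ∈ range (n + 1), m.choose k * (n - 1).choose (n - k) := by
  rw [Nat.ascFactorial_eq_factorial_mul_choose']
  congr 1
  cases n with
  | zero => simp
  | succ n =>
    rw [Nat.add_succ_sub_one, Nat.add_choose_eq,
      Finset.Nat.sum_antidiagonal_eq_sum_range_succ (fun i j => m.choose i * n.choose j)]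
    rfl

-- The truncated `n - 1` makes this right at `k = 0` too: `C(n-1, n)` is `1` if `n = 0`, else `0`.
lemma Lah_eq_factorial_div_mul_choose {n k : ℕ} (hk : k ≤ n) :
    Lah n k = n ! / k ! * (n - 1).choose (n - k) := by
  unfold Lah
  split_ifs with hk0 hn0
  · simp [hk0, hn0]
  · simp [hk0, Nat.choose_eq_zero_of_lt (by omega : n - 1 < n)]
  · rw [Nat.choose_symm_of_eq_add (by omega : n - 1 = (k - 1) + (n - k))]

lemma hasSum_poisson_mul_choose (r : ℝ≥0) (k : ℕ) :
    HasSum (fun m : ℕ => Real.exp (-r) * r ^ m / m ! * m.choose k) ((r : ℝ) ^ k / k !) := by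
  rw [← hasSum_nat_add_iff' k]
  have hzero : ∑ m ∈ range k, Real.exp (-r) * r ^ m / m ! * (m.choose k : ℝ) = 0 :=
    sum_eq_zero fun m hm => by simp [Nat.choose_eq_zero_of_lt (mem_range.1 hm)]
  have hshift : ∀ i, Real.exp (-r) * r ^ (i + k) / (i + k)! * ((i + k).choose k : ℝ) =
      r ^ k / k ! * (Real.exp (-r) * r ^ i / i !) := fun i => by
    have hC : ((i + k).choose k : ℝ) ≠ 0 := Nat.cast_ne_zero.2 (Nat.choose_pos (by omega)).ne'
    rw [← Nat.add_choose_mul_factorial_mul_factorial i k]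
    push_cast
    field_simp
    ring
  simpa [hzero, hshift] using (hasSum_one_poissonMeasure r).mul_left ((r : ℝ) ^ k / k !)

lemma hasSum_poisson_mul_asc (r : ℝ≥0) (n : ℕ) :
    HasSum (fun m : ℕ => Real.exp (-r) * r ^ m / m ! * asc m n) (LahBell n r) := by
  have hterm : ∀ m : ℕ, Real.exp (-r) * r ^ m / m ! * asc m n = ∑ k ∈ range (n + 1),
      n ! * (n - 1).choose (n - k) * (Real.exp (-r) * r ^ m / m ! * m.choose k) := fun m => by
    rw [asc_natCast, Nat.ascFactorial_eq_factorial_mul_sum_choose]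
    push_cast
    rw [mul_sum, mul_sum]
    exact sum_congr rfl fun k _ => by ring
  have hLah : LahBell n r =
      ∑ k ∈ range (n + 1), n ! * (n - 1).choose (n - k) * ((r : ℝ) ^ k / k !) :=
    sum_congr rfl fun k hk => by
      rw [Lah_eq_factorial_div_mul_choose (Nat.lt_succ_iff.1 (mem_range.1 hk))]
      ring
  simp only [hterm, hLah]
  exact hasSum_sum fun k _ => (hasSum_poisson_mul_choose r k).mul_left _

namespace ProbabilityTheory

lemma integral_asc_map_natCast_poissonMeasure (r : ℝ≥0) (n : ℕ) :
    ∫ x, asc x n ∂Po(ℝ, r) = LahBell n r := by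
  rw [MeasurableEmbedding.natCast.integral_map, integral_poissonMeasure]
  exact (hasSum_poisson_mul_asc r n).tsum_eq

lemma poissonMeasure_zero : Po(0) = Measure.dirac 0 :=
  Measure.ext_of_singleton fun i => by cases i <;> simp [poissonMeasure_singleton]

variable {Ω R : Type*} [MeasurableSpace Ω] {μ : Measure Ω} [IsProbabilityMeasure μ]
  [MeasurableSpace R]

lemma hasLaw_map_natCast_of_measure_preimage_singleton [MeasurableSingletonClass R]
    [AddMonoidWithOne R] [CharZero R]
    {ν : Measure ℕ} [IsProbabilityMeasure ν] {X : Ω → R} (hX : AEMeasurable X μ)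
    (h : ∀ i : ℕ, μ (X ⁻¹' {(i : R)}) = ν {i}) :
    HasLaw X (ν.map Nat.cast) μ := by
  have hcast : MeasurableEmbedding (Nat.cast : ℕ → R) := .natCast
  have hcomap : (μ.map X).comap Nat.cast = ν := Measure.ext_of_singleton fun i => by
    rw [hcast.comap_apply, Set.image_singleton,
      Measure.map_apply_of_aemeasurable hX (measurableSet_singleton _), h]
  have hrestrict : (μ.map X).restrict (Set.range Nat.cast) = ν.map Nat.cast := by
    rw [← hcast.map_comap, hcomap]
  have : IsProbabilityMeasure (μ.map X) := Measure.isProbabilityMeasure_map hX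
  have : IsProbabilityMeasure (ν.map (Nat.cast : ℕ → R)) :=
    Measure.isProbabilityMeasure_map measurable_from_nat.aemeasurable
  have hae : ∀ᵐ x ∂μ.map X, x ∈ Set.range (Nat.cast : ℕ → R) := by
    rw [ae_mem_iff_measure_eq hcast.measurableSet_range.nullMeasurableSet,
      ← Measure.restrict_apply_univ, hrestrict, measure_univ, measure_univ]
  exact ⟨hX, (Measure.restrict_eq_self_of_ae_mem hae).symm.trans hrestrict⟩

lemma iIndepFun.hasLaw_sum_range_map_natCast_poissonMeasure [AddCommMonoidWithOne R]
    [MeasurableAdd₂ R] {X : ℕ → Ω → R} (hindep : iIndepFun X μ) {r : ℝ≥0}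
    (hX : ∀ j, HasLaw (X j) Po(R, r) μ) (k : ℕ) :
    HasLaw (∑ j ∈ range k, X j) Po(R, k * r) μ := by
  induction k with
  | zero =>
    rw [range_zero, sum_empty, Nat.cast_zero, zero_mul, poissonMeasure_zero,
      Measure.map_dirac' measurable_from_nat, Nat.cast_zero]
    exact hasLaw_dirac_of_ae_eq (ae_of_all _ fun _ => rfl)
  | succ k ih =>
    rw [sum_range_succ, Nat.cast_succ, add_mul, one_mul]
    exact (hindep.indepFun_sum_range_succ₀ (fun j => (hX j).aemeasurable) k)
      |>.hasLaw_add_map_cast_poissonMeasure ih (hX k)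

end ProbabilityTheory

theorem statement_12_general {Ω : Type*} [MeasurableSpace Ω] (μ : Measure Ω) [IsProbabilityMeasure μ]
    (Y : Ω → ℝ) (Ys : ℕ → Ω → ℝ)
    (hid : ∀ j, IdentDistrib (Ys j) Y μ μ)
    (hindep : iIndepFun Ys μ)
    (α : ℝ) (hα : 0 < α)
    (hpois : ∀ i : ℕ, μ {ω | Y ω = (i : ℝ)} =
      ENNReal.ofReal (Real.exp (-α) * α ^ i / i.factorial))
    (n k : ℕ) :
    ∫ ω, asc (∑ j ∈ Finset.range k, Ys j ω) n ∂μ = LahBell n (α * k) := by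
  have hr : ((Real.toNNReal α : ℝ≥0) : ℝ) = α := Real.coe_toNNReal α hα.le
  have hY : HasLaw Y Po(ℝ, α.toNNReal) μ :=
    hasLaw_map_natCast_of_measure_preimage_singleton (hid 0).aemeasurable_snd fun i => by
      rw [poissonMeasure_singleton, hr]
      exact hpois i
  have hS := hindep.hasLaw_sum_range_map_natCast_poissonMeasure
    (fun j => (hid j).symm.hasLaw hY) k
  have hkα : ((k * α.toNNReal : ℝ≥0) : ℝ) = α * k := by push_cast; rw [hr, mul_comm]
  rw [← hkα, ← integral_asc_map_natCast_poissonMeasure,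
    ← hS.integral_comp (continuous_asc n).aestronglyMeasurable]
  simp only [Function.comp_def, Finset.sum_apply]

theorem statement_12 {Ω : Type*} [MeasurableSpace Ω] (μ : Measure Ω) [IsProbabilityMeasure μ]
    (Y : Ω → ℝ) (Ys : ℕ → Ω → ℝ)
    (hY : Measurable Y) (hYs : ∀ j, Measurable (Ys j))
    (hid : ∀ j, IdentDistrib (Ys j) Y μ μ)
    (hindep : iIndepFun Ys μ)
    (α : ℝ) (hα : 0 < α)
    (hpois : ∀ i : ℕ, μ {ω | Y ω = (i : ℝ)} =
      ENNReal.ofReal (Real.exp (-α) * α ^ i / i.factorial))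
    (n k : ℕ) :
    ∫ ω, asc (∑ j ∈ Finset.range k, Ys j ω) n ∂μ = LahBell n (α * k) :=
  statement_12_general μ Y Ys hid hindep α hα hpois n k
end
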